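/- arXiv:math/0512555 — 2 statements merged into one kernel-verified Lean document; each statement's English description precedes it below -/
import Mathlib

section
/- For a Lie algebra L and r ∈ Im(1 − τ) ⊆ L ⊗ L, with Δ = Δ_r defined by Δ_r(x) = x·r, the co-Jacobi defect satisfies (1 + ξ + ξ²) ∘ (1 ⊗ Δ) ∘ Δ(x) = x · c(r) for all x ∈ L, where ξ is the cyclic permutation on L^{⊗3} and the action on L^{⊗3} is the adjoint diagonal action. -/
open scoped TensorProduct
open scoped Classical

noncomputable section

variable {L : Type*} [LieRing L] [LieAlgebra ℂ L]

attribute [local instance] LieRing.ofAssociativeRing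

/-- The bracket of `L` as a bilinear map. -/
def brMap (L : Type*) [LieRing L] [LieAlgebra ℂ L] : L →ₗ[ℂ] L →ₗ[ℂ] L :=
  (LieAlgebra.ad ℂ L : L →ₗ⁅ℂ⁆ Module.End ℂ L).toLinearMap

/-- `c(r) = [r¹²,r¹³] + [r¹²,r²³] + [r¹³,r²³]` as an element of `L ⊗ L ⊗ L`. -/
def cybe (L : Type*) [LieRing L] [LieAlgebra ℂ L] (r : L ⊗[ℂ] L) : L ⊗[ℂ] (L ⊗[ℂ] L) :=
  let μ : L ⊗[ℂ] L →ₗ[ℂ] L := TensorProduct.lift (brMap L)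
  let ttt := (TensorProduct.tensorTensorTensorComm ℂ L L L L).toLinearMap
  let c1 := (TensorProduct.map μ LinearMap.id) ∘ₗ ttt
  let c2 := (TensorProduct.map LinearMap.id (TensorProduct.map μ LinearMap.id)) ∘ₗ
      (TensorProduct.map LinearMap.id (TensorProduct.assoc ℂ L L L).symm.toLinearMap) ∘ₗ
      (TensorProduct.assoc ℂ L L (L ⊗[ℂ] L)).toLinearMap
  let c3 := (TensorProduct.assoc ℂ L L L).toLinearMap ∘ₗ (TensorProduct.map LinearMap.id μ) ∘ₗ ttt
  c1 (r ⊗ₜ r) + c2 (r ⊗ₜ r) + c3 (r ⊗ₜ r)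

/-- The twist map `τ : x ⊗ y ↦ y ⊗ x`. -/
def twist (L : Type*) [LieRing L] [LieAlgebra ℂ L] : L ⊗[ℂ] L →ₗ[ℂ] L ⊗[ℂ] L :=
  (TensorProduct.comm ℂ L L).toLinearMap

/-- The cyclic map `ξ : x ⊗ y ⊗ z ↦ y ⊗ z ⊗ x`. -/
def cyc (L : Type*) [LieRing L] [LieAlgebra ℂ L] :
    L ⊗[ℂ] (L ⊗[ℂ] L) →ₗ[ℂ] L ⊗[ℂ] (L ⊗[ℂ] L) :=
  (TensorProduct.assoc ℂ L L L).toLinearMap ∘ₗ (TensorProduct.comm ℂ L (L ⊗[ℂ] L)).toLinearMap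

/-- The coboundary `Δ_r : x ↦ x · r` as a linear map. -/
def DeltaR (r : L ⊗[ℂ] L) : L →ₗ[ℂ] L ⊗[ℂ] L where
  toFun x := ⁅x, r⁆
  map_add' x y := add_lie x y r
  map_smul' c x := smul_lie c x r

/-!
Both sides are quadratic in `r`. Polarize: `(s, t) ↦ (1 + ξ + ξ²)((1 ⊗ Δ_t)(Δ_s x))` and
`(s, t) ↦ x · c(s, t)`, with `c(s, t) = [s¹², t¹³] + [s¹², t²³] + [s¹³, t²³]`, are bilinear. They
do not agree, but their symmetrizations do on pairs of skew tensors `a ⊗ b - b ⊗ a`,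
`c ⊗ d - d ⊗ c`: expanding, the difference vanishes by antisymmetry and the Jacobi identity. These
tensors span `Im(1 - τ)`, and at `s = t = r` the symmetrized identity is twice the theorem.
-/

open TensorProduct

lemma cyc_tmul (a b c : L) : cyc L (a ⊗ₜ (b ⊗ₜ c)) = b ⊗ₜ (c ⊗ₜ a) := rfl

lemma twist_tmul (a b : L) : twist L (a ⊗ₜ b) = b ⊗ₜ a := rfl

lemma DeltaR_add (t t' : L ⊗[ℂ] L) : DeltaR (t + t') = DeltaR t + DeltaR t' :=
  LinearMap.ext fun y => lie_add y t t'

lemma DeltaR_smul (c : ℂ) (t : L ⊗[ℂ] L) : DeltaR (c • t) = c • DeltaR t :=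
  LinearMap.ext fun y => lie_smul c y t

variable (L) in
abbrev cycSum : Module.End ℂ (L ⊗[ℂ] (L ⊗[ℂ] L)) := LinearMap.id + cyc L + cyc L ∘ₗ cyc L

def coJacobiDefectForm (x : L) : L ⊗[ℂ] L →ₗ[ℂ] L ⊗[ℂ] L →ₗ[ℂ] L ⊗[ℂ] (L ⊗[ℂ] L) :=
  LinearMap.mk₂ ℂ
    (fun s t => cycSum L (map LinearMap.id (DeltaR t) ⁅x, s⁆))
    (fun s s' t => by simp only [lie_add, map_add])
    (fun c s t => by simp only [lie_smul, map_smul])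
    (fun s t t' => by simp only [DeltaR_add, map_add_right, LinearMap.add_apply, map_add])
    (fun c s t => by simp only [DeltaR_smul, map_smul_right, LinearMap.smul_apply, map_smul])

variable (L) in
def cybeMap : (L ⊗[ℂ] L) ⊗[ℂ] (L ⊗[ℂ] L) →ₗ[ℂ] L ⊗[ℂ] (L ⊗[ℂ] L) :=
  let μ : L ⊗[ℂ] L →ₗ[ℂ] L := lift (brMap L)
  let ttt := (tensorTensorTensorComm ℂ L L L L).toLinearMap
  let c1 := map μ LinearMap.id ∘ₗ ttt
  let c2 := map LinearMap.id (map μ LinearMap.id) ∘ₗ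
      map LinearMap.id (TensorProduct.assoc ℂ L L L).symm.toLinearMap ∘ₗ
      (TensorProduct.assoc ℂ L L (L ⊗[ℂ] L)).toLinearMap
  let c3 := (TensorProduct.assoc ℂ L L L).toLinearMap ∘ₗ map LinearMap.id μ ∘ₗ ttt
  c1 + c2 + c3

lemma cybeMap_tmul (a b c d : L) :
    cybeMap L ((a ⊗ₜ b) ⊗ₜ (c ⊗ₜ d)) =
      ⁅a, c⁆ ⊗ₜ (b ⊗ₜ d) + a ⊗ₜ (⁅b, c⁆ ⊗ₜ d) + a ⊗ₜ (c ⊗ₜ ⁅b, d⁆) := rfl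

lemma coJacobiDefectForm_tmul (x a b c d : L) :
    coJacobiDefectForm x (a ⊗ₜ b) (c ⊗ₜ d) =
      cycSum L
        (⁅x, a⁆ ⊗ₜ (⁅b, c⁆ ⊗ₜ d + c ⊗ₜ ⁅b, d⁆) + a ⊗ₜ (⁅⁅x, b⁆, c⁆ ⊗ₜ d + c ⊗ₜ ⁅⁅x, b⁆, d⁆)) :=
  rfl

lemma coJacobiDefectForm_add_swap_skew_tmul (x a b c d : L) :
    coJacobiDefectForm x (a ⊗ₜ b - b ⊗ₜ a) (c ⊗ₜ d - d ⊗ₜ c)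
        + coJacobiDefectForm x (c ⊗ₜ d - d ⊗ₜ c) (a ⊗ₜ b - b ⊗ₜ a)
      = ⁅x, cybeMap L ((a ⊗ₜ b - b ⊗ₜ a) ⊗ₜ (c ⊗ₜ d - d ⊗ₜ c))
          + cybeMap L ((c ⊗ₜ d - d ⊗ₜ c) ⊗ₜ (a ⊗ₜ b - b ⊗ₜ a))⁆ := by
  simp only [map_sub, LinearMap.sub_apply, tmul_sub, sub_tmul, coJacobiDefectForm_tmul,
    cybeMap_tmul, LinearMap.add_apply, LinearMap.comp_apply, LinearMap.id_apply, map_add, cyc_tmul,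
    tmul_add, lie_add, lie_sub, LieModule.lie_tmul_right]
  -- Normal form: brackets among `a, b, c, d` in alphabetical order, double brackets as `⁅p, ⁅x, q⁆⁆`.
  have swap (p q : L) : ⁅q, p⁆ = -⁅p, q⁆ := (lie_skew q p).symm
  have swap_left (p q : L) : ⁅⁅x, p⁆, q⁆ = -⁅q, ⁅x, p⁆⁆ := swap q ⁅x, p⁆
  have jacobi (p q : L) : ⁅x, ⁅p, q⁆⁆ = ⁅p, ⁅x, q⁆⁆ - ⁅q, ⁅x, p⁆⁆ := by
    rw [leibniz_lie, swap_left]; abel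
  simp only [swap c a, swap c b, swap d a, swap d b, lie_neg, jacobi, swap_left, tmul_neg, neg_tmul,
    tmul_sub, sub_tmul]
  module

lemma coJacobiDefectForm_add_swap {s t : L ⊗[ℂ] L} (x : L)
    (hs : s ∈ LinearMap.range (LinearMap.id - twist L))
    (ht : t ∈ LinearMap.range (LinearMap.id - twist L)) :
    coJacobiDefectForm x s t + coJacobiDefectForm x t s
      = ⁅x, cybeMap L (s ⊗ₜ t) + cybeMap L (t ⊗ₜ s)⁆ := by
  let P : L ⊗[ℂ] L →ₗ[ℂ] L ⊗[ℂ] L := LinearMap.id - twist L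
  let C := (mk ℂ _ _).compr₂ (cybeMap L)
  have h : (coJacobiDefectForm x).compl₁₂ P P + ((coJacobiDefectForm x).compl₁₂ P P).flip =
      (C.compl₁₂ P P + (C.compl₁₂ P P).flip).compr₂ (LieModule.toEnd ℂ L _ x) := by
    refine ext' fun a b => ext' fun c d => ?_
    simpa only [LinearMap.add_apply, LinearMap.compl₁₂_apply, LinearMap.flip_apply,
      LinearMap.compr₂_apply, mk_apply, LieModule.toEnd_apply_apply, P, C, LinearMap.sub_apply,
      LinearMap.id_apply, twist_tmul] using coJacobiDefectForm_add_swap_skew_tmul x a b c d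
  obtain ⟨u, rfl⟩ := hs
  obtain ⟨v, rfl⟩ := ht
  exact LinearMap.congr_fun₂ h u v

/-- For `r ∈ Im(1 − τ)` and `Δ = Δ_r`, the co-Jacobi defect satisfies
`(1 + ξ + ξ²) ∘ (1 ⊗ Δ) ∘ Δ (x) = x · c(r)`. -/
theorem coJacobi_defect_eq_action_on_cybe
    (L : Type*) [LieRing L] [LieAlgebra ℂ L] (r : L ⊗[ℂ] L)
    (hr : r ∈ LinearMap.range (LinearMap.id - twist L)) (x : L) :
    ((LinearMap.id + cyc L + cyc L ∘ₗ cyc L) ∘ₗ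
        TensorProduct.map LinearMap.id (DeltaR r) ∘ₗ DeltaR r) x
      = ⁅x, cybe L r⁆ := by
  show coJacobiDefectForm x r r = ⁅x, cybeMap L (r ⊗ₜ r)⁆
  have h := coJacobiDefectForm_add_swap x hr hr
  rw [← two_smul ℂ, ← two_smul ℂ, lie_smul] at h
  exact smul_right_injective _ two_ne_zero h
end
end

section
/- For a Lie algebra L and r ∈ Im(1 − τ) ⊆ L ⊗ L, the triple (L, [·,·], Δ_r) is a Lie bialgebra if and only if r satisfies the modern Yang–Baxter equation x · c(r) = 0 for all x ∈ L. -/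
open scoped TensorProduct
open scoped Classical

noncomputable section

variable {L : Type*} [LieRing L] [LieAlgebra ℂ L]

attribute [local instance 100] LieRing.ofAssociativeRing

/-! Δ_r is a 1-coboundary, so compatibility is the Jacobi identity, and anticommutativity holds
because `1 - τ` commutes with the action of `L`. The co-Jacobiator of Δ_r at `x` and `c(r)` are
quadratic in `r`. Polarize both and symmetrize on skew tensors, `u ⊗ v ↦ σu ⊗ σv + σv ⊗ σu` with
`σ = 1 - τ`: then the first becomes `x` acting on the second, a direct computation on pure
tensors using the Jacobi identity. At `u = v = s` with `σ s = r` both sides pick up a factor `2`. -/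

open TensorProduct

lemma twist_lie (x : L) (u : L ⊗[ℂ] L) : twist L ⁅x, u⁆ = ⁅x, twist L u⁆ := by
  induction u using TensorProduct.induction_on with
  | zero => simp
  | tmul a b => simp [twist, LieModule.lie_tmul_right, add_comm]
  | add u v hu hv => rw [lie_add, map_add, map_add, lie_add, hu, hv]

lemma DeltaR_mem_range_of_mem_range {r : L ⊗[ℂ] L}
    (hr : r ∈ LinearMap.range (LinearMap.id - twist L)) (x : L) :
    DeltaR r x ∈ LinearMap.range (LinearMap.id - twist L) := by
  obtain ⟨s, rfl⟩ := hr
  refine ⟨⁅x, s⁆, ?_⟩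
  simp [DeltaR, twist_lie, lie_sub]

lemma DeltaR_lie (r : L ⊗[ℂ] L) (x y : L) :
    DeltaR r ⁅x, y⁆ = ⁅x, DeltaR r y⁆ - ⁅y, DeltaR r x⁆ :=
  lie_lie x y r

def polarCoJacobi (x : L) : (L ⊗[ℂ] L) ⊗[ℂ] (L ⊗[ℂ] L) →ₗ[ℂ] L ⊗[ℂ] (L ⊗[ℂ] L) :=
  (LinearMap.id + cyc L + cyc L ∘ₗ cyc L) ∘ₗ
    lift (LinearMap.lTensorHom L ∘ₗ
      (LieModule.toEnd ℂ L (L ⊗[ℂ] L) : L →ₗ[ℂ] Module.End ℂ (L ⊗[ℂ] L)).flip).flip ∘ₗ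
    map (LieModule.toEnd ℂ L (L ⊗[ℂ] L) x) LinearMap.id

lemma polarCoJacobi_tmul (x : L) (u v : L ⊗[ℂ] L) :
    polarCoJacobi x (u ⊗ₜ v) =
      ((LinearMap.id + cyc L + cyc L ∘ₗ cyc L) ∘ₗ map LinearMap.id (DeltaR v) ∘ₗ DeltaR u) x :=
  rfl

def polarCybe (L : Type*) [LieRing L] [LieAlgebra ℂ L] :
    (L ⊗[ℂ] L) ⊗[ℂ] (L ⊗[ℂ] L) →ₗ[ℂ] L ⊗[ℂ] (L ⊗[ℂ] L) :=
  let μ : L ⊗[ℂ] L →ₗ[ℂ] L := lift (brMap L)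
  let ttt := (tensorTensorTensorComm ℂ L L L L).toLinearMap
  map μ LinearMap.id ∘ₗ ttt +
    map LinearMap.id (map μ LinearMap.id) ∘ₗ
      map LinearMap.id (TensorProduct.assoc ℂ L L L).symm.toLinearMap ∘ₗ
      (TensorProduct.assoc ℂ L L (L ⊗[ℂ] L)).toLinearMap +
    (TensorProduct.assoc ℂ L L L).toLinearMap ∘ₗ map LinearMap.id μ ∘ₗ ttt

lemma cybe_eq_polarCybe (r : L ⊗[ℂ] L) : cybe L r = polarCybe L (r ⊗ₜ r) := rfl

def symmetrize (L : Type*) [LieRing L] [LieAlgebra ℂ L] :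
    (L ⊗[ℂ] L) ⊗[ℂ] (L ⊗[ℂ] L) →ₗ[ℂ] (L ⊗[ℂ] L) ⊗[ℂ] (L ⊗[ℂ] L) :=
  map (LinearMap.id - twist L) (LinearMap.id - twist L) ∘ₗ
    (LinearMap.id + (TensorProduct.comm ℂ (L ⊗[ℂ] L) (L ⊗[ℂ] L)).toLinearMap)

lemma symmetrize_tmul_self (s : L ⊗[ℂ] L) :
    symmetrize L (s ⊗ₜ s) =
      (2 : ℂ) • ((s - twist L s) ⊗ₜ (s - twist L s)) := by
  simp [symmetrize, two_smul]

lemma polarCoJacobi_comp_symmetrize (x : L) :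
    polarCoJacobi x ∘ₗ symmetrize L =
      LieModule.toEnd ℂ L _ x ∘ₗ polarCybe L ∘ₗ symmetrize L := by
  refine ext_fourfold' fun a b c d => ?_
  simp only [symmetrize, polarCoJacobi_tmul, polarCybe, cyc, twist, brMap, DeltaR,
    LinearMap.coe_comp, Function.comp_apply, LinearMap.add_apply, LinearMap.sub_apply,
    LinearMap.id_coe, id_eq, LinearMap.coe_mk, AddHom.coe_mk, map_sub, map_add,
    LieModule.lie_tmul_right, map_tmul, tmul_add, tmul_sub, sub_tmul,
    LinearEquiv.coe_coe, comm_tmul, assoc_tmul, assoc_symm_tmul, tensorTensorTensorComm_tmul,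
    lift.tmul, LieHom.coe_toLinearMap, LieAlgebra.ad_apply, LieModule.toEnd_apply_apply]
  -- normal form: `x` only in innermost brackets `⁅u, ⁅x, v⁆⁆`, and `⁅a, c⁆` rather than `⁅c, a⁆`
  have swap_x : ∀ u v : L, ⁅⁅x, u⁆, v⁆ = -⁅v, ⁅x, u⁆⁆ := fun u v => (lie_skew _ _).symm
  have jacobi_x : ∀ u v : L, ⁅x, ⁅u, v⁆⁆ = ⁅u, ⁅x, v⁆⁆ - ⁅v, ⁅x, u⁆⁆ := fun u v => by
    rw [leibniz_lie x u v, swap_x]; abel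
  simp only [swap_x, jacobi_x, ← lie_skew a c, ← lie_skew a d, ← lie_skew b c, ← lie_skew b d,
    lie_neg, tmul_neg, neg_tmul, sub_tmul, tmul_sub]
  abel

lemma coJacobiator_DeltaR_eq_lie_cybe {r : L ⊗[ℂ] L}
    (hr : r ∈ LinearMap.range (LinearMap.id - twist L)) (x : L) :
    ((LinearMap.id + cyc L + cyc L ∘ₗ cyc L) ∘ₗ map LinearMap.id (DeltaR r) ∘ₗ DeltaR r) x =
      ⁅x, cybe L r⁆ := by
  obtain ⟨s, hs⟩ := hr
  have h := LinearMap.congr_fun (polarCoJacobi_comp_symmetrize x) (s ⊗ₜ s)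
  simp only [LinearMap.comp_apply, symmetrize_tmul_self, show s - twist L s = r from hs, map_smul,
    polarCoJacobi_tmul, LieModule.toEnd_apply_apply, ← cybe_eq_polarCybe] at h
  exact smul_right_injective _ (two_ne_zero : (2 : ℂ) ≠ 0) h

/-- For `r ∈ Im(1 − τ)`, the triple `(L, [·,·], Δ_r)` is a Lie bialgebra if and
only if `r` satisfies the modern Yang–Baxter equation `x · c(r) = 0` for all `x`. -/
theorem lie_bialgebra_iff_mybe
    (L : Type*) [LieRing L] [LieAlgebra ℂ L] (r : L ⊗[ℂ] L)
    (hr : r ∈ LinearMap.range (LinearMap.id - twist L)) :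
    ((∀ x : L, DeltaR r x ∈ LinearMap.range (LinearMap.id - twist L)) ∧
     (∀ x : L,
        ((LinearMap.id + cyc L + cyc L ∘ₗ cyc L) ∘ₗ
          TensorProduct.map LinearMap.id (DeltaR r) ∘ₗ DeltaR r) x = 0) ∧
     (∀ x y : L, DeltaR r ⁅x, y⁆ = ⁅x, DeltaR r y⁆ - ⁅y, DeltaR r x⁆))
    ↔ (∀ x : L, ⁅x, cybe L r⁆ = 0) := by
  simp only [coJacobiator_DeltaR_eq_lie_cybe hr]
  exact ⟨fun h => h.2.1, fun h => ⟨DeltaR_mem_range_of_mem_range hr, h, DeltaR_lie r⟩⟩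

end
end
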